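/- Let a, b ≥ 2 be integers and n ≥ a(b+1). Let G be an edge coloring of K_n such that every a(b+1)-element subset of vertices spans edges of at least (a(b+1) choose 2) − ba + b + 1 distinct colors. Then every color c appears on at most b(a−1)·n/2 edges of K_n. -/

import Mathlib

/-!
If a colour `c` occupied more than `b(a-1)n/2` edges, some vertex `v` would meet more than
`b(a-1)` edges of colour `c`. A set of `a(b+1)` vertices containing `v` and `b(a-1)+1` of these
neighbours spans at least `b(a-1)+1` edges of the single colour `c`, hence at most
`(a(b+1) choose 2) - b(a-1)` colours, one fewer than the local property demands.
-/

open Finset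

def colorsIn {n : ℕ} {α : Type} [DecidableEq α]
    (col : Sym2 (Fin n) → α) (S : Finset (Fin n)) : Finset α :=
  (S.sym2.filter (fun e => ¬ e.IsDiag)).image col

def edgeCount {n : ℕ} {α : Type} [DecidableEq α]
    (col : Sym2 (Fin n) → α) (c : α) : ℕ :=
  (Finset.univ.filter (fun e : Sym2 (Fin n) => ¬ e.IsDiag ∧ col e = c)).card

lemma Nat.sub_one_le_choose_two (k : ℕ) : k - 1 ≤ k.choose 2 := by
  cases k with
  | zero => simp
  | succ m => simp [Nat.choose_succ_succ]

lemma card_filter_not_isDiag_sym2 {β : Type*} [DecidableEq β] (s : Finset β) :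
    #{e ∈ s.sym2 | ¬e.IsDiag} = (#s).choose 2 := by
  rw [sym2_eq_image, Sym2.filter_image_mk_not_isDiag, Sym2.card_image_offDiag]

section ColorClass

variable {n : ℕ} {α : Type} [DecidableEq α] (col : Sym2 (Fin n) → α) (c : α)

abbrev colorGraph : SimpleGraph (Fin n) := SimpleGraph.fromEdgeSet {e | col e = c}

def colorEdgesIn (S : Finset (Fin n)) : Finset (Sym2 (Fin n)) :=
  {e ∈ S.sym2 | ¬e.IsDiag ∧ col e = c}

lemma sum_degree_colorGraph : ∑ v, (colorGraph col c).degree v = 2 * edgeCount col c := by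
  rw [SimpleGraph.sum_degrees_eq_twice_card_edges, edgeCount]
  congr 2
  ext e
  simp [SimpleGraph.edgeSet_fromEdgeSet, and_comm]

lemma exists_lt_degree_colorGraph {D : ℕ} (h : D * n < 2 * edgeCount col c) :
    ∃ v, D < (colorGraph col c).degree v := by
  have hsum : ∑ _v : Fin n, D < ∑ v, (colorGraph col c).degree v := by
    rw [sum_degree_colorGraph, sum_const, card_univ, Fintype.card_fin, smul_eq_mul, mul_comm]
    exact h
  obtain ⟨v, -, hv⟩ := exists_lt_of_sum_lt hsum
  exact ⟨v, hv⟩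

lemma card_colorsIn_add_card_colorEdgesIn_le (S : Finset (Fin n)) :
    #(colorsIn col S) + #(colorEdgesIn col c S) ≤ (#S).choose 2 + 1 := by
  set E := {e ∈ S.sym2 | ¬e.IsDiag}
  have hsplit : #(colorEdgesIn col c S) + #{e ∈ E | col e ≠ c} = (#S).choose 2 := by
    rw [colorEdgesIn, ← filter_filter, card_filter_add_card_filter_not,
      card_filter_not_isDiag_sym2]
  have hsub : colorsIn col S ⊆ insert c ({e ∈ E | col e ≠ c}.image col) := by
    intro x hx
    obtain ⟨e, he, rfl⟩ := mem_image.1 hx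
    by_cases hec : col e = c
    · simp [hec]
    · exact mem_insert_of_mem (mem_image_of_mem col (mem_filter.2 ⟨he, hec⟩))
  have hcolors : #(colorsIn col S) ≤ #{e ∈ E | col e ≠ c} + 1 :=
    calc #(colorsIn col S) ≤ #(insert c ({e ∈ E | col e ≠ c}.image col)) := card_le_card hsub
      _ ≤ #({e ∈ E | col e ≠ c}.image col) + 1 := card_insert_le _ _
      _ ≤ #{e ∈ E | col e ≠ c} + 1 := Nat.add_le_add_right card_image_le 1
  omega

lemma card_inter_neighborFinset_le_card_colorEdgesIn {S : Finset (Fin n)} {v : Fin n}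
    (hv : v ∈ S) : #((colorGraph col c).neighborFinset v ∩ S) ≤ #(colorEdgesIn col c S) := by
  refine card_le_card_of_injOn (fun u => s(v, u)) (fun u hu => ?_)
    (fun u _ w _ h => Sym2.congr_right.1 h)
  rw [mem_coe, mem_inter, SimpleGraph.mem_neighborFinset, SimpleGraph.fromEdgeSet_adj] at hu
  simp only [colorEdgesIn, mem_coe, mem_filter, mk_mem_sym2_iff, Sym2.mk_isDiag_iff]
  exact ⟨⟨hv, hu.2⟩, hu.1.2, hu.1.1⟩

lemma exists_card_eq_lt_card_colorEdgesIn {D k : ℕ} {v : Fin n}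
    (hv : D < (colorGraph col c).degree v) (hk : D + 2 ≤ k) (hkn : k ≤ n) :
    ∃ S : Finset (Fin n), #S = k ∧ D < #(colorEdgesIn col c S) := by
  rw [← SimpleGraph.card_neighborFinset_eq_degree] at hv
  obtain ⟨T, hT, hTcard⟩ := exists_subset_card_eq (n := D + 1) hv
  have hvT : v ∉ T := fun h => by simpa using hT h
  obtain ⟨S, hTS, -, hS⟩ := exists_subsuperset_card_eq (n := k) (subset_univ (insert v T))
    (by rw [card_insert_of_notMem hvT]; omega) (by simpa using hkn)
  refine ⟨S, hS, ?_⟩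
  calc D < #T := by omega
    _ ≤ #((colorGraph col c).neighborFinset v ∩ S) :=
      card_le_card (subset_inter hT ((subset_insert v T).trans hTS))
    _ ≤ #(colorEdgesIn col c S) :=
      card_inter_neighborFinset_le_card_colorEdgesIn col c (hTS (mem_insert_self v T))

end ColorClass

theorem stmt12_general (a b n : ℕ) (ha : 2 ≤ a) (hn : a * (b + 1) ≤ n)
    (α : Type) [DecidableEq α] (col : Sym2 (Fin n) → α)
    (hlocal : ∀ S : Finset (Fin n), S.card = a * (b + 1) →
      (a * (b + 1)).choose 2 - b * a + b + 1 ≤ (colorsIn col S).card) :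
    ∀ c : α, (edgeCount col c : ℝ) ≤ (b : ℝ) * ((a : ℝ) - 1) * (n : ℝ) / 2 := by
  intro c
  by_contra! hgt
  have hdense : b * (a - 1) * n < 2 * edgeCount col c := by
    have : ((b * (a - 1) * n : ℕ) : ℝ) < 2 * edgeCount col c := by
      rw [Nat.cast_mul, Nat.cast_mul, Nat.cast_pred (by omega)]
      linarith
    exact_mod_cast this
  have hsub : b * (a - 1) + b = b * a := by
    rw [Nat.mul_sub_one, Nat.sub_add_cancel (Nat.le_mul_of_pos_right b (by omega))]
  have hk : b * a + 2 ≤ a * (b + 1) := by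
    rw [mul_add_one, mul_comm b]
    omega
  obtain ⟨v, hv⟩ := exists_lt_degree_colorGraph col c hdense
  obtain ⟨S, hS, hedges⟩ := exists_card_eq_lt_card_colorEdgesIn col c hv (by omega) hn
  have hcount := card_colorsIn_add_card_colorEdgesIn_le col c S
  rw [hS] at hcount
  -- rules out truncation of the subtraction in `hlocal`
  have hchoose := Nat.sub_one_le_choose_two (a * (b + 1))
  have hloc := hlocal S hS
  omega

/-- Let `a, b ≥ 2` and `n ≥ a(b+1)`. In every edge coloring of `K_n` in which every
`a(b+1)`-element vertex subset spans at least `(a(b+1) choose 2) - ba + b + 1` distinct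
colors, every color appears on at most `b(a-1)n/2` edges. -/
theorem stmt12 (a b n : ℕ) (ha : 2 ≤ a) (hb : 2 ≤ b) (hn : a * (b + 1) ≤ n)
    (α : Type) [DecidableEq α] (col : Sym2 (Fin n) → α)
    (hlocal : ∀ S : Finset (Fin n), S.card = a * (b + 1) →
      (a * (b + 1)).choose 2 - b * a + b + 1 ≤ (colorsIn col S).card) :
    ∀ c : α, (edgeCount col c : ℝ) ≤ (b : ℝ) * ((a : ℝ) - 1) * (n : ℝ) / 2 :=
  stmt12_general a b n ha hn α col hlocal
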